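/- Let E and F be complete lattices and f : E × F → E × F monotone with components f₁, f₂. Then the first component of the least fixed point of f equals μx. f₁(x, μy. f₂(x,y)). -/
import Mathlib


/-- Least fixed point of `g` (Knaster-Tarski for monotone `g`). -/
def lfp {α : Type*} [CompleteLattice α] (g : α → α) : α := sInf {x | g x ≤ x}

theorem lfp_le' {α : Type*} [CompleteLattice α] {g : α → α} {x : α} (h : g x ≤ x) :
    lfp g ≤ x := sInf_le h

theorem map_lfp' {α : Type*} [CompleteLattice α] {g : α → α} (hg : Monotone g) :
    g (lfp g) = lfp g := by
  have h1 : g (lfp g) ≤ lfp g := le_sInf fun x hx => (hg (sInf_le hx)).trans hx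
  exact le_antisymm h1 (sInf_le (hg h1))

theorem bekic_fst {E F : Type*} [CompleteLattice E] [CompleteLattice F]
    (f : E × F → E × F) (hf : Monotone f) :
    (lfp f).1 = lfp (fun x => (f (x, lfp (fun y => (f (x, y)).2))).1) := by
  set L := fun x : E => lfp (fun y => (f (x, y)).2) with hL
  have hinner : ∀ x : E, Monotone (fun y => (f (x, y)).2) := fun x y1 y2 h =>
    (hf (Prod.mk_le_mk.mpr ⟨le_rfl, h⟩)).2
  have hLmono : Monotone L := by
    intro x1 x2 h
    apply lfp_le'
    have : (f (x1, L x2)).2 ≤ (f (x2, L x2)).2 := (hf (Prod.mk_le_mk.mpr ⟨h, le_rfl⟩)).2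
    exact this.trans (le_of_eq (map_lfp' (hinner x2)))
  set G := fun x : E => (f (x, L x)).1 with hG
  have hGmono : Monotone G := by
    intro x1 x2 h
    exact (hf (Prod.mk_le_mk.mpr ⟨h, hLmono h⟩)).1
  have hfix : f (lfp f) = lfp f := map_lfp' hf
  have ha : (f ((lfp f).1, (lfp f).2)).1 = (lfp f).1 := by rw [Prod.mk.eta, hfix]
  have hb : (f ((lfp f).1, (lfp f).2)).2 = (lfp f).2 := by rw [Prod.mk.eta, hfix]
  apply le_antisymm
  · -- (lfp f).1 ≤ lfp G
    set x := lfp G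
    have hGx : G x = x := map_lfp' hGmono
    have hy : (f (x, L x)).2 = L x := map_lfp' (hinner x)
    have : f (x, L x) ≤ (x, L x) := by
      constructor
      · exact le_of_eq hGx
      · exact le_of_eq hy
    have hle : lfp f ≤ (x, L x) := lfp_le' this
    exact hle.1
  · -- lfp G ≤ (lfp f).1
    apply lfp_le'
    have hLb : L (lfp f).1 ≤ (lfp f).2 := lfp_le' (le_of_eq hb)
    calc G (lfp f).1 ≤ (f ((lfp f).1, (lfp f).2)).1 :=
          (hf (Prod.mk_le_mk.mpr ⟨le_rfl, hLb⟩)).1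
      _ = (lfp f).1 := ha
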